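/- arXiv:2312.12052 — 6 statements merged into one kernel-verified Lean document; each statement's English description precedes it below -/
import Mathlib

section
/- If Alice has a winning strategy in the (Point, Open)-Set game on a space X, then Bob has a winning strategy in the R-nw-selective game on X. -/
/-!
Bob simulates Alice's winning strategy `α` in the (Point, Open)-Set game. When Alice plays a
network `𝒩ₙ` in the R-nw-selective game, Bob asks `α` for its move `(xₙ, Uₙ)` against his
previous picks and answers with a member of `𝒩ₙ` squeezed between `xₙ` and `Uₙ`. His picks are
then a legal run against `α`, so they form a network.
-/

open Set Cardinal TopologicalSpace

/-- A family of subsets is a *network*: every point and open neighbourhood admit a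
member of the family squeezed between them. -/
def IsNetwork {X : Type*} [TopologicalSpace X] (𝒩 : Set (Set X)) : Prop :=
  ∀ (x : X) (U : Set X), IsOpen U → x ∈ U → ∃ N ∈ 𝒩, x ∈ N ∧ N ⊆ U

/-- The collection of countable networks of a space. -/
def CtblNetwork (X : Type*) [TopologicalSpace X] : Set (Set (Set X)) :=
  {𝒩 | 𝒩.Countable ∧ IsNetwork 𝒩}

/-- The weight of a topological space: the least cardinality of a basis. -/
noncomputable def topWeight (X : Type*) [TopologicalSpace X] : Cardinal :=
  sInf { c | ∃ B : Set (Set X), TopologicalSpace.IsTopologicalBasis B ∧ Cardinal.mk B = c }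

/-! ### The R-nw-selective game -/

/-- A strategy for Bob in the R-nw-selective game: given Alice's moves so far
(the networks played in innings `0,…,n`), Bob picks a set. -/
def RBobStrategy (X : Type*) [TopologicalSpace X] : Type _ :=
  ∀ n : ℕ, (Fin (n + 1) → Set (Set X)) → Set X

/-- Bob's strategy `σ` is winning in the R-nw-selective game: against any run where Alice
plays countable networks, Bob's answers are legal and form a network. -/
def RBobWinning {X : Type*} [TopologicalSpace X] (σ : RBobStrategy X) : Prop :=
  ∀ A : ℕ → Set (Set X), (∀ n, A n ∈ CtblNetwork X) →
    (∀ n, σ n (fun i => A i.1) ∈ A n) ∧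
    IsNetwork (Set.range fun n => σ n (fun i : Fin (n + 1) => A i.1))

/-- Bob has a winning strategy in the R-nw-selective game. -/
def RBobWins (X : Type*) [TopologicalSpace X] : Prop :=
  ∃ σ : RBobStrategy X, RBobWinning σ

/-- A strategy for Alice in the R-nw-selective game: given Bob's previous picks,
Alice plays a (countable) network. -/
def RAliceStrategy (X : Type*) [TopologicalSpace X] : Type _ :=
  ∀ n : ℕ, (Fin n → Set X) → Set (Set X)

/-- Alice's strategy `α` is winning in the R-nw-selective game: it always plays countable
networks, and no legal sequence of Bob's answers forms a network. -/
def RAliceWinning {X : Type*} [TopologicalSpace X] (α : RAliceStrategy X) : Prop :=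
  (∀ n h, α n h ∈ CtblNetwork X) ∧
  ∀ b : ℕ → Set X, (∀ n, b n ∈ α n (fun i : Fin n => b i.1)) → ¬ IsNetwork (Set.range b)

/-- Alice has a winning strategy in the R-nw-selective game. -/
def RAliceWins (X : Type*) [TopologicalSpace X] : Prop :=
  ∃ α : RAliceStrategy X, RAliceWinning α

/-- The R-nw-selective selection principle. -/
def RNwSelective (X : Type*) [TopologicalSpace X] : Prop :=
  ∀ A : ℕ → Set (Set X), (∀ n, A n ∈ CtblNetwork X) →
    ∃ b : ℕ → Set X, (∀ n, b n ∈ A n) ∧ IsNetwork (Set.range b)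

/-! ### The M-nw-selective game -/

/-- A strategy for Bob in the M-nw-selective game: given Alice's networks so far,
Bob picks a finite collection of sets. -/
def MBobStrategy (X : Type*) [TopologicalSpace X] : Type _ :=
  ∀ n : ℕ, (Fin (n + 1) → Set (Set X)) → Finset (Set X)

/-- Bob's strategy is winning in the M-nw-selective game. -/
def MBobWinning {X : Type*} [TopologicalSpace X] (σ : MBobStrategy X) : Prop :=
  ∀ A : ℕ → Set (Set X), (∀ n, A n ∈ CtblNetwork X) →
    (∀ n, ↑(σ n (fun i => A i.1)) ⊆ A n) ∧
    IsNetwork (⋃ n, (↑(σ n (fun i : Fin (n + 1) => A i.1)) : Set (Set X)))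

/-- Bob has a winning strategy in the M-nw-selective game. -/
def MBobWins (X : Type*) [TopologicalSpace X] : Prop :=
  ∃ σ : MBobStrategy X, MBobWinning σ

/-- A strategy for Alice in the M-nw-selective game. -/
def MAliceStrategy (X : Type*) [TopologicalSpace X] : Type _ :=
  ∀ n : ℕ, (Fin n → Finset (Set X)) → Set (Set X)

/-- Alice's strategy is winning in the M-nw-selective game. -/
def MAliceWinning {X : Type*} [TopologicalSpace X] (α : MAliceStrategy X) : Prop :=
  (∀ n h, α n h ∈ CtblNetwork X) ∧
  ∀ b : ℕ → Finset (Set X), (∀ n, ↑(b n) ⊆ α n (fun i : Fin n => b i.1)) →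
    ¬ IsNetwork (⋃ n, (↑(b n) : Set (Set X)))

/-- Alice has a winning strategy in the M-nw-selective game. -/
def MAliceWins (X : Type*) [TopologicalSpace X] : Prop :=
  ∃ α : MAliceStrategy X, MAliceWinning α

/-- The M-nw-selective selection principle. -/
def MNwSelective (X : Type*) [TopologicalSpace X] : Prop :=
  ∀ A : ℕ → Set (Set X), (∀ n, A n ∈ CtblNetwork X) →
    ∃ F : ℕ → Finset (Set X), (∀ n, ↑(F n) ⊆ A n) ∧
      IsNetwork (⋃ n, (↑(F n) : Set (Set X)))

/-! ### The (Point, Open)-Set game -/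

/-- A strategy for Alice in the (Point, Open)-Set game: given Bob's previous picks,
Alice plays a point together with an open neighbourhood of it. -/
def POAliceStrategy (X : Type*) [TopologicalSpace X] : Type _ :=
  ∀ n : ℕ, (Fin n → Set X) → X × Set X

/-- Alice's strategy is winning in the (Point, Open)-Set game: her moves are legal
(a point inside an open set), and every legal sequence of Bob's answers is a network. -/
def POAliceWinning {X : Type*} [TopologicalSpace X] (α : POAliceStrategy X) : Prop :=
  (∀ n h, (α n h).1 ∈ (α n h).2 ∧ IsOpen (α n h).2) ∧
  ∀ b : ℕ → Set X,
    (∀ n, (α n (fun i : Fin n => b i.1)).1 ∈ b n ∧ b n ⊆ (α n (fun i : Fin n => b i.1)).2) →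
    IsNetwork (Set.range b)

/-- Alice has a winning strategy in the (Point, Open)-Set game. -/
def POAliceWins (X : Type*) [TopologicalSpace X] : Prop :=
  ∃ α : POAliceStrategy X, POAliceWinning α

/-- A strategy for Bob in the (Point, Open)-Set game. -/
def POBobStrategy (X : Type*) [TopologicalSpace X] : Type _ :=
  ∀ n : ℕ, (Fin (n + 1) → X × Set X) → Set X

/-- Bob's strategy is winning in the (Point, Open)-Set game: his answers are legal and
never form a network, whenever Alice plays legally. -/
def POBobWinning {X : Type*} [TopologicalSpace X] (σ : POBobStrategy X) : Prop :=
  ∀ A : ℕ → X × Set X, (∀ n, (A n).1 ∈ (A n).2 ∧ IsOpen (A n).2) →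
    (∀ n, (A n).1 ∈ σ n (fun i => A i.1) ∧ σ n (fun i => A i.1) ⊆ (A n).2) ∧
    ¬ IsNetwork (Set.range fun n => σ n (fun i : Fin (n + 1) => A i.1))

/-- Bob has a winning strategy in the (Point, Open)-Set game. -/
def POBobWins (X : Type*) [TopologicalSpace X] : Prop :=
  ∃ σ : POBobStrategy X, POBobWinning σ

/-! ### The game `G_k(Nw, Nw)` -/

/-- Bob's strategy (same shape as in the M-game) is winning in `G_k(Nw,Nw)`:
he always selects exactly `k` elements of Alice's network, and his selections
accumulate to a network. -/
def GkBobWinning {X : Type*} [TopologicalSpace X] (k : ℕ) (σ : MBobStrategy X) : Prop :=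
  ∀ A : ℕ → Set (Set X), (∀ n, A n ∈ CtblNetwork X) →
    (∀ n, ↑(σ n (fun i => A i.1)) ⊆ A n ∧ (σ n (fun i : Fin (n + 1) => A i.1)).card = k) ∧
    IsNetwork (⋃ n, (↑(σ n (fun i : Fin (n + 1) => A i.1)) : Set (Set X)))

/-- Bob has a winning strategy in `G_k(Nw,Nw)`. -/
def GkBobWins (X : Type*) [TopologicalSpace X] (k : ℕ) : Prop :=
  ∃ σ : MBobStrategy X, GkBobWinning k σ

/-- Alice's strategy is winning in `G_k(Nw,Nw)`. -/
def GkAliceWinning {X : Type*} [TopologicalSpace X] (k : ℕ) (α : MAliceStrategy X) : Prop :=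
  (∀ n h, α n h ∈ CtblNetwork X) ∧
  ∀ b : ℕ → Finset (Set X),
    (∀ n, ↑(b n) ⊆ α n (fun i : Fin n => b i.1) ∧ (b n).card = k) →
    ¬ IsNetwork (⋃ n, (↑(b n) : Set (Set X)))

/-- Alice has a winning strategy in `G_k(Nw,Nw)`. -/
def GkAliceWins (X : Type*) [TopologicalSpace X] (k : ℕ) : Prop :=
  ∃ α : MAliceStrategy X, GkAliceWinning k α

/-! ### Cardinal characteristics and Martin's Axiom -/

/-- `cov(M)`: the least cardinality of a family of meager subsets of `ℝ` covering `ℝ`. -/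
noncomputable def covMeager : Cardinal :=
  sInf { c | ∃ S : Set (Set ℝ), (∀ A ∈ S, IsMeagre A) ∧ ⋃₀ S = Set.univ ∧ Cardinal.mk S = c }

/-- `𝔡`: the dominating number, the least cardinality of a dominating family in `ω^ω`. -/
noncomputable def domNumber : Cardinal :=
  sInf { c | ∃ D : Set (ℕ → ℕ), (∀ g : ℕ → ℕ, ∃ f ∈ D, ∀ᶠ n in Filter.atTop, g n ≤ f n) ∧
    Cardinal.mk D = c }

/-- A subset of a poset is dense (downwards). -/
def PosetDense {P : Type*} [Preorder P] (D : Set P) : Prop :=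
  ∀ p : P, ∃ q ∈ D, q ≤ p

/-- A filter on a poset: nonempty, upwards closed and downwards directed. -/
def PosetFilter {P : Type*} [Preorder P] (F : Set P) : Prop :=
  F.Nonempty ∧ (∀ p ∈ F, ∀ q, p ≤ q → q ∈ F) ∧
    ∀ p ∈ F, ∀ q ∈ F, ∃ r ∈ F, r ≤ p ∧ r ≤ q

/-- The countable chain condition for a poset: every antichain is countable. -/
def PosetCCC (P : Type*) [Preorder P] : Prop :=
  ∀ A : Set P, (∀ p ∈ A, ∀ q ∈ A, p ≠ q → ¬ ∃ r, r ≤ p ∧ r ≤ q) → A.Countable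

/-- Martin's Axiom below the cardinal `c`: for every nonempty ccc poset and every family of
fewer than `c` dense sets, there is a filter meeting all of them. -/
def MartinsAxiomBelow (c : Cardinal) : Prop :=
  ∀ (P : Type) [Preorder P], Nonempty P → PosetCCC P →
    ∀ 𝒟 : Set (Set P), (∀ D ∈ 𝒟, PosetDense D) → Cardinal.mk 𝒟 < c →
      ∃ F : Set P, PosetFilter F ∧ ∀ D ∈ 𝒟, (F ∩ D).Nonempty

section

variable {X : Type*} [TopologicalSpace X]

/-- Junk (an arbitrary set) unless `𝒩` has a member between `p.1` and `p.2`. -/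
noncomputable def networkPick (𝒩 : Set (Set X)) (p : X × Set X) : Set X :=
  Classical.epsilon fun N => N ∈ 𝒩 ∧ p.1 ∈ N ∧ N ⊆ p.2

lemma IsNetwork.networkPick_spec {𝒩 : Set (Set X)} (h𝒩 : IsNetwork 𝒩) {p : X × Set X}
    (hp : p.1 ∈ p.2 ∧ IsOpen p.2) :
    networkPick 𝒩 p ∈ 𝒩 ∧ p.1 ∈ networkPick 𝒩 p ∧ networkPick 𝒩 p ⊆ p.2 :=
  Classical.epsilon_spec (h𝒩 p.1 p.2 hp.2 hp.1)

noncomputable def POAliceStrategy.toRBobStrategy (α : POAliceStrategy X) :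
    ∀ n : ℕ, (Fin (n + 1) → Set (Set X)) → Set X
  | n, 𝒜 => networkPick (𝒜 (Fin.last n))
      (α n fun i => α.toRBobStrategy i fun j => 𝒜 (Fin.castLE (by omega) j))

lemma POAliceStrategy.toRBobStrategy_apply (α : POAliceStrategy X) (A : ℕ → Set (Set X))
    (n : ℕ) :
    α.toRBobStrategy n (fun i => A i) =
      networkPick (A n) (α n fun i : Fin n => α.toRBobStrategy i fun j => A j) := by
  rw [POAliceStrategy.toRBobStrategy.eq_1]
  rfl

lemma POAliceWinning.rBobWinning_toRBobStrategy {α : POAliceStrategy X}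
    (hα : POAliceWinning α) : RBobWinning α.toRBobStrategy := by
  intro A hA
  set b : ℕ → Set X := fun n => α.toRBobStrategy n fun i => A i
  have hb : ∀ n, b n ∈ A n ∧ (α n fun i : Fin n => b i).1 ∈ b n ∧
      b n ⊆ (α n fun i : Fin n => b i).2 := fun n => by
    simp only [b]
    rw [α.toRBobStrategy_apply]
    exact (hA n).2.networkPick_spec (hα.1 n _)
  exact ⟨fun n => (hb n).1, hα.2 b fun n => (hb n).2⟩

end

theorem stmt2_general {X : Type*} [TopologicalSpace X]
    (h : POAliceWins X) : RBobWins X :=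
  let ⟨α, hα⟩ := h
  ⟨α.toRBobStrategy, hα.rBobWinning_toRBobStrategy⟩

theorem stmt2 {X : Type*} [TopologicalSpace X] [T2Space X]
    (h : POAliceWins X) : RBobWins X :=
  stmt2_general h
end

section
/- If Alice has a winning strategy in the R-nw-selective game on a space X, then Bob has a winning strategy in the (Point, Open)-Set game on X. -/
open Set Cardinal TopologicalSpace

/-!
Bob answers Alice's move `(xₙ, Uₙ)` by consulting Alice's winning strategy `α` in the
R-nw-selective game: fed with Bob's earlier answers, `α` yields a network, and Bob answers with a
member of it lying between `xₙ` and `Uₙ`. Bob's answers are then a legal run of the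
R-nw-selective game against `α`, so they do not form a network.
-/

section PointOpenOfSelective

open Classical in
noncomputable def chooseBetween {X : Type*} (𝒩 : Set (Set X)) (p : X × Set X) : Set X :=
  if h : ∃ N ∈ 𝒩, p.1 ∈ N ∧ N ⊆ p.2 then h.choose else ∅

variable {X : Type*} [TopologicalSpace X]

lemma IsNetwork.chooseBetween_spec {𝒩 : Set (Set X)} (h𝒩 : IsNetwork 𝒩) {p : X × Set X}
    (hp : p.1 ∈ p.2 ∧ IsOpen p.2) :
    chooseBetween 𝒩 p ∈ 𝒩 ∧ p.1 ∈ chooseBetween 𝒩 p ∧ chooseBetween 𝒩 p ⊆ p.2 := by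
  have hex : ∃ N ∈ 𝒩, p.1 ∈ N ∧ N ⊆ p.2 := h𝒩 p.1 p.2 hp.2 hp.1
  rw [chooseBetween, dif_pos hex]
  exact hex.choose_spec

noncomputable def RAliceStrategy.simulatedPicks (α : RAliceStrategy X) (A : ℕ → X × Set X) :
    ℕ → Set X
  | n => chooseBetween (α n fun i : Fin n => simulatedPicks α A i) (A n)
  termination_by n => n
  decreasing_by exact i.2

namespace RAliceStrategy

variable (α : RAliceStrategy X)

lemma simulatedPicks_congr {A A' : ℕ → X × Set X} {n : ℕ} (h : ∀ m ≤ n, A m = A' m) :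
    α.simulatedPicks A n = α.simulatedPicks A' n := by
  induction n using Nat.strong_induction_on with
  | _ n ih =>
    have hprev : (fun i : Fin n => α.simulatedPicks A i) =
        fun i : Fin n => α.simulatedPicks A' i :=
      funext fun i => ih i i.2 fun m hm => h m (hm.trans i.2.le)
    rw [simulatedPicks, simulatedPicks, hprev, h n le_rfl]

/-- `simulatedPicks` as a strategy: Alice's finite history is padded to an infinite sequence,
which does not matter by `simulatedPicks_congr`. -/
noncomputable def toPOBobStrategy : POBobStrategy X := fun n A =>
  α.simulatedPicks (fun m => if hm : m < n + 1 then A ⟨m, hm⟩ else A 0) n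

lemma toPOBobStrategy_apply (A : ℕ → X × Set X) (n : ℕ) :
    α.toPOBobStrategy n (fun i => A i) = α.simulatedPicks A n :=
  simulatedPicks_congr α fun m hm => by simp [Nat.lt_succ_of_le hm]

lemma simulatedPicks_spec (hα : ∀ n h, α n h ∈ CtblNetwork X) {A : ℕ → X × Set X}
    (hA : ∀ n, (A n).1 ∈ (A n).2 ∧ IsOpen (A n).2) (n : ℕ) :
    α.simulatedPicks A n ∈ α n (fun i : Fin n => α.simulatedPicks A i) ∧
      (A n).1 ∈ α.simulatedPicks A n ∧ α.simulatedPicks A n ⊆ (A n).2 := by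
  rw [simulatedPicks]
  exact (hα n _).2.chooseBetween_spec (hA n)

end RAliceStrategy

end PointOpenOfSelective

theorem stmt3_general {X : Type*} [TopologicalSpace X]
    (h : RAliceWins X) : POBobWins X := by
  obtain ⟨α, hα, hwin⟩ := h
  refine ⟨α.toPOBobStrategy, fun A hA => ?_⟩
  simp only [α.toPOBobStrategy_apply]
  have hspec := α.simulatedPicks_spec hα hA
  exact ⟨fun n => (hspec n).2, hwin _ fun n => (hspec n).1⟩

theorem stmt3 {X : Type*} [TopologicalSpace X] [T2Space X]
    (h : RAliceWins X) : POBobWins X :=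
  stmt3_general h
end

section
/- Assume ω₁ < cov(M). For any subspace X of the real line of cardinality ω₁, the R-nw-selective game on X is indeterminate: neither Alice nor Bob has a winning strategy. -/
open Set Cardinal TopologicalSpace

/-!
Alice. Enumerate every network a strategy `α` of Alice can play; a point `g` of the Baire space
then codes the play in which Bob answers with member number `g n` at inning `n`. For a point `x`
and a basic open `U ∋ x`, the codes whose play has a pick `N` with `x ∈ N ⊆ U` form a dense open
set, and there are `|X| · ℵ₀ < cov(M)` such sets. Coding the Baire space by reals through
nested half-open intervals (the piece number `k` of `[a, b)` is the part between the fractions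
`1 - 2⁻ᵏ` and `1 - 2⁻⁽ᵏ⁺¹⁾` of the way from `a` to `b`), their preimages are residual in `ℝ`,
so fewer than `cov(M)` of them have a common point; its code is a play defeating `α`.

Bob. Alice plays, for points `x₀, x₁, …`, countable networks in which `{xₙ}` is the only member
containing `xₙ`, so each answer of Bob is either `{xₙ}` or a basic set missing `xₙ`. Fix in
advance one point answered by its own singleton, when there is one, and one point for each
possible basic answer. Along the countable tree of histories built from these choices only
countably many points are answered by their singletons; for a point `y` outside them, Alice
plays the chosen singleton point or else the chosen point getting Bob's answer to `y`, and no
answer of Bob ever contains `y`.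
-/

open PiNat (cylinder cylinder_anti self_mem_cylinder update_mem_cylinder isOpen_cylinder
  isTopologicalBasis_cylinders mem_cylinder_iff_eq)

section CovMeager

theorem covMeager_le_mk {S : Set (Set ℝ)} (hS : ∀ A ∈ S, IsMeagre A) (hcover : ⋃₀ S = Set.univ) :
    covMeager ≤ #S :=
  csInf_le' ⟨S, hS, hcover, rfl⟩

theorem aleph0_lt_covMeager : ℵ₀ < covMeager := by
  have hne :
      {c | ∃ S : Set (Set ℝ), (∀ A ∈ S, IsMeagre A) ∧ ⋃₀ S = Set.univ ∧ #S = c}.Nonempty := by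
    refine ⟨_, range (singleton : ℝ → Set ℝ), ?_, ?_, rfl⟩
    · rintro _ ⟨r, rfl⟩
      apply IsNowhereDense.isMeagre
      rw [IsNowhereDense, closure_singleton, interior_singleton]
    · exact sUnion_eq_univ_iff.2 fun r => ⟨{r}, mem_range_self r, rfl⟩
  obtain ⟨S, hS, hcover, hcard⟩ := csInf_mem hne
  by_contra hle
  have hS_countable : S.Countable :=
    le_aleph0_iff_set_countable.1 (hcard.trans_le (not_lt.1 hle))
  apply not_isMeagre_of_isOpen (X := ℝ) isOpen_univ univ_nonempty
  rw [← hcover, sUnion_eq_biUnion]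
  exact isMeagre_biUnion hS_countable hS

theorem exists_forall_mem_residual_of_mk_lt_covMeager {ι : Type} {R : ι → Set ℝ}
    (hR : ∀ i, R i ∈ residual ℝ) (hι : #ι < covMeager) : ∃ r, ∀ i, r ∈ R i := by
  by_contra! h
  have hcover : ⋃₀ range (fun i => (R i)ᶜ) = Set.univ :=
    sUnion_eq_univ_iff.2 fun r => let ⟨i, hi⟩ := h r; ⟨_, mem_range_self i, hi⟩
  have hmeagre : ∀ A ∈ range (fun i => (R i)ᶜ), IsMeagre A := by
    rintro _ ⟨i, rfl⟩
    simpa [IsMeagre] using hR i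
  exact ((covMeager_le_mk hmeagre hcover).trans mk_range_le).not_gt hι

end CovMeager

noncomputable section IntervalScheme

def unitPiece (k : ℕ) : Set ℝ := Ico (1 - 2⁻¹ ^ k) (1 - 2⁻¹ ^ (k + 1))

lemma mem_unitPiece_iff {t : ℝ} {k : ℕ} :
    t ∈ unitPiece k ↔ 2⁻¹ ^ (k + 1) < 1 - t ∧ 1 - t ≤ 2⁻¹ ^ k := by
  rw [unitPiece, mem_Ico]
  constructor <;> rintro ⟨h₁, h₂⟩ <;> constructor <;> linarith

lemma unitPiece_subset (k : ℕ) : unitPiece k ⊆ Ico 0 1 := fun t ht => by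
  rw [mem_unitPiece_iff] at ht
  have : (2⁻¹ : ℝ) ^ k ≤ 1 := pow_le_one₀ (by norm_num) (by norm_num)
  exact ⟨by linarith [ht.2], by linarith [ht.1, pow_pos (by norm_num : (0 : ℝ) < 2⁻¹) (k + 1)]⟩

lemma exists_mem_unitPiece {t : ℝ} (ht : t ∈ Ico (0 : ℝ) 1) : ∃ k, t ∈ unitPiece k := by
  obtain ⟨k, hk⟩ := exists_nat_pow_near_of_lt_one (x := 1 - t) (y := 2⁻¹)
    (by linarith [ht.2]) (by linarith [ht.1]) (by norm_num) (by norm_num)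
  exact ⟨k, mem_unitPiece_iff.2 hk⟩

lemma eq_of_mem_unitPiece {t : ℝ} {k l : ℕ} (hk : t ∈ unitPiece k) (hl : t ∈ unitPiece l) :
    k = l := by
  rw [mem_unitPiece_iff] at hk hl
  have h₁ := (pow_lt_pow_iff_right_of_lt_one₀ (by norm_num : (0 : ℝ) < 2⁻¹) (by norm_num)).1
    (hk.1.trans_le hl.2)
  have h₂ := (pow_lt_pow_iff_right_of_lt_one₀ (by norm_num : (0 : ℝ) < 2⁻¹) (by norm_num)).1
    (hl.1.trans_le hk.2)
  omega

def toIco (p : ℝ × ℝ) : Set ℝ := Ico p.1 p.2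

lemma mem_Ico_affine_iff {p : ℝ × ℝ} (hp : p.1 < p.2) {r : ℝ} (s t : ℝ) :
    r ∈ Ico (p.1 + (p.2 - p.1) * s) (p.1 + (p.2 - p.1) * t) ↔
      (r - p.1) / (p.2 - p.1) ∈ Ico s t := by
  have hL : 0 < p.2 - p.1 := sub_pos.2 hp
  simp only [mem_Ico, le_div_iff₀ hL, div_lt_iff₀ hL]
  constructor <;> rintro ⟨h₁, h₂⟩ <;> constructor <;> linarith

lemma mem_toIco_iff {p : ℝ × ℝ} (hp : p.1 < p.2) {r : ℝ} :
    r ∈ toIco p ↔ (r - p.1) / (p.2 - p.1) ∈ Ico 0 1 := by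
  simpa [toIco] using mem_Ico_affine_iff hp 0 1

def childInterval (k : ℕ) (p : ℝ × ℝ) : ℝ × ℝ :=
  (p.1 + (p.2 - p.1) * (1 - 2⁻¹ ^ k), p.1 + (p.2 - p.1) * (1 - 2⁻¹ ^ (k + 1)))

lemma mem_toIco_childInterval_iff {p : ℝ × ℝ} (hp : p.1 < p.2) {r : ℝ} {k : ℕ} :
    r ∈ toIco (childInterval k p) ↔ (r - p.1) / (p.2 - p.1) ∈ unitPiece k :=
  mem_Ico_affine_iff hp _ _

lemma childInterval_length (k : ℕ) (p : ℝ × ℝ) :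
    (childInterval k p).2 - (childInterval k p).1 = (p.2 - p.1) * 2⁻¹ ^ (k + 1) := by
  simp only [childInterval]
  ring

lemma childInterval_lt {p : ℝ × ℝ} (hp : p.1 < p.2) (k : ℕ) :
    (childInterval k p).1 < (childInterval k p).2 := by
  have := childInterval_length k p
  have : 0 < (p.2 - p.1) * 2⁻¹ ^ (k + 1) := by have := sub_pos.2 hp; positivity
  linarith

lemma toIco_childInterval_subset {p : ℝ × ℝ} (hp : p.1 < p.2) (k : ℕ) :
    toIco (childInterval k p) ⊆ toIco p := fun _ hr =>
  (mem_toIco_iff hp).2 (unitPiece_subset k ((mem_toIco_childInterval_iff hp).1 hr))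

def codeInterval (g : ℕ → ℕ) : ℕ → ℝ × ℝ
  | 0 => (0, 1)
  | n + 1 => childInterval (g n) (codeInterval g n)

lemma codeInterval_lt (g : ℕ → ℕ) : ∀ n, (codeInterval g n).1 < (codeInterval g n).2
  | 0 => by norm_num [codeInterval]
  | n + 1 => childInterval_lt (codeInterval_lt g n) _

lemma codeInterval_length_le (g : ℕ → ℕ) :
    ∀ n, (codeInterval g n).2 - (codeInterval g n).1 ≤ 2⁻¹ ^ n
  | 0 => by norm_num [codeInterval]
  | n + 1 => by
    have : (2⁻¹ : ℝ) ^ (g n + 1) ≤ 2⁻¹ :=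
      pow_le_of_le_one (by norm_num) (by norm_num) (Nat.succ_ne_zero _)
    rw [codeInterval, childInterval_length, pow_succ (2⁻¹ : ℝ) n]
    exact mul_le_mul (codeInterval_length_le g n) this (by positivity) (by positivity)

lemma toIco_codeInterval_anti (g : ℕ → ℕ) {m n : ℕ} (h : m ≤ n) :
    toIco (codeInterval g n) ⊆ toIco (codeInterval g m) := by
  induction n, h using Nat.le_induction with
  | base => rfl
  | succ n _ ih => exact (toIco_childInterval_subset (codeInterval_lt g n) _).trans ih

lemma codeInterval_congr {g g' : ℕ → ℕ} :
    ∀ {n}, g' ∈ cylinder g n → codeInterval g' n = codeInterval g n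
  | 0, _ => rfl
  | n + 1, h => by
    rw [codeInterval, codeInterval, codeInterval_congr (cylinder_anti _ n.le_succ h),
      h n n.lt_succ_self]

def pieceIndex (r : ℝ) (p : ℝ × ℝ) : ℕ :=
  Classical.epsilon fun k => r ∈ toIco (childInterval k p)

lemma mem_toIco_childInterval_pieceIndex {p : ℝ × ℝ} (hp : p.1 < p.2) {r : ℝ} (hr : r ∈ toIco p) :
    r ∈ toIco (childInterval (pieceIndex r p) p) := by
  obtain ⟨k, hk⟩ := exists_mem_unitPiece ((mem_toIco_iff hp).1 hr)
  exact Classical.epsilon_spec (p := fun k => r ∈ toIco (childInterval k p))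
    ⟨k, (mem_toIco_childInterval_iff hp).2 hk⟩

lemma pieceIndex_eq {p : ℝ × ℝ} (hp : p.1 < p.2) {r : ℝ} {k : ℕ}
    (hr : r ∈ toIco (childInterval k p)) : pieceIndex r p = k :=
  eq_of_mem_unitPiece ((mem_toIco_childInterval_iff hp).1
    (Classical.epsilon_spec (p := fun k => r ∈ toIco (childInterval k p)) ⟨k, hr⟩))
    ((mem_toIco_childInterval_iff hp).1 hr)

def decodeInterval (r : ℝ) : ℕ → ℝ × ℝ
  | 0 => (0, 1)
  | n + 1 => childInterval (pieceIndex r (decodeInterval r n)) (decodeInterval r n)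

def decode (r : ℝ) (n : ℕ) : ℕ := pieceIndex r (decodeInterval r n)

lemma codeInterval_decode (r : ℝ) : ∀ n, codeInterval (decode r) n = decodeInterval r n
  | 0 => rfl
  | n + 1 => by rw [codeInterval, codeInterval_decode r n, decode, decodeInterval]

lemma mem_toIco_codeInterval_decode {r : ℝ} (hr : r ∈ Ico (0 : ℝ) 1) :
    ∀ n, r ∈ toIco (codeInterval (decode r) n)
  | 0 => hr
  | n + 1 => by
    have h := mem_toIco_childInterval_pieceIndex (codeInterval_lt (decode r) n)
      (mem_toIco_codeInterval_decode hr n)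
    rw [codeInterval_decode] at h ⊢
    exact h

lemma decode_mem_cylinder {g : ℕ → ℕ} {r : ℝ} :
    ∀ {n}, r ∈ toIco (codeInterval g n) → decode r ∈ cylinder g n
  | 0, _ => by simp
  | n + 1, hr => by
    have hprefix := decode_mem_cylinder
      (toIco_childInterval_subset (codeInterval_lt g n) _ hr)
    have hlast : decode r n = g n := by
      rw [decode, ← codeInterval_decode, codeInterval_congr hprefix]
      exact pieceIndex_eq (codeInterval_lt g n) hr
    intro i hi
    rcases Nat.lt_succ_iff_lt_or_eq.1 hi with hi | rfl
    exacts [hprefix i hi, hlast]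

lemma exists_toIco_codeInterval_subset {u v : ℝ} (hu : 0 ≤ u) (huv : u < v) (hv : v ≤ 1) :
    ∃ g n, toIco (codeInterval g n) ⊆ Ioo u v := by
  set t := (u + v) / 2 with ht_def
  obtain ⟨n, hn⟩ := exists_pow_lt_of_lt_one (half_pos (sub_pos.2 huv)) (by norm_num : (2⁻¹ : ℝ) < 1)
  have ht := mem_toIco_codeInterval_decode (r := t) ⟨by linarith, by linarith⟩ n
  have hlen := codeInterval_length_le (decode t) n
  refine ⟨decode t, n, fun r hr => ⟨?_, ?_⟩⟩
  · linarith [ht.2, hr.1]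
  · linarith [ht.1, hr.2]

end IntervalScheme

section BaireSpace

lemma exists_cylinder_subset_of_dense {E : ℕ → Type*} [∀ n, TopologicalSpace (E n)]
    [∀ n, DiscreteTopology (E n)] {D : Set (∀ n, E n)} (hDo : IsOpen D) (hDd : Dense D)
    (g : ∀ n, E n) (n : ℕ) : ∃ g' ∈ cylinder g n, ∃ n' ≥ n, cylinder g' n' ⊆ D := by
  obtain ⟨g', hg'n, hg'D⟩ :=
    hDd.inter_open_nonempty _ (isOpen_cylinder E g n) ⟨g, self_mem_cylinder g n⟩
  obtain ⟨_, ⟨y, m, rfl⟩, hg'm, hmD⟩ :=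
    (isTopologicalBasis_cylinders E).exists_subset_of_mem_open hg'D hDo
  rw [← mem_cylinder_iff_eq.1 hg'm] at hmD
  exact ⟨g', hg'n, max n m, le_max_left n m,
    (cylinder_anti g' (le_max_right n m)).trans hmD⟩

noncomputable def baireCode (r : ℝ) : ℕ → ℕ := decode (Int.fract r)

theorem preimage_baireCode_mem_residual {D : Set (ℕ → ℕ)} (hDo : IsOpen D) (hDd : Dense D) :
    baireCode ⁻¹' D ∈ residual ℝ := by
  refine Filter.mem_of_superset (residual_of_dense_open isOpen_interior ?_) interior_subset
  refine dense_iff_inter_open.2 fun U hU ⟨w, hw⟩ => ?_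
  obtain ⟨ε, hε, hball⟩ := Metric.isOpen_iff.1 hU w hw
  set m := ⌊w⌋
  obtain ⟨g, n, hgn⟩ := exists_toIco_codeInterval_subset (Int.fract_nonneg w)
    (lt_min (by linarith) (Int.fract_lt_one w) : Int.fract w < min (Int.fract w + ε) 1)
    (min_le_right _ _)
  obtain ⟨g', hg', n', hnn', hD⟩ := exists_cylinder_subset_of_dense hDo hDd g n
  set p := codeInterval g' n'
  have hsub : toIco p ⊆ Ioo (Int.fract w) (min (Int.fract w + ε) 1) := by
    refine (toIco_codeInterval_anti g' hnn').trans ?_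
    rwa [codeInterval_congr hg']
  have hV : ∀ x ∈ Ioo (m + p.1) (m + p.2), x ∈ U ∧ x ∈ baireCode ⁻¹' D := by
    intro x hx
    have hxp : x - m ∈ toIco p := ⟨by linarith [hx.1], by linarith [hx.2]⟩
    have hxw := hsub hxp
    have hw_eq : (m : ℝ) + Int.fract w = w := Int.floor_add_fract w
    refine ⟨hball (Real.ball_eq_Ioo w ε ▸ ⟨?_, ?_⟩), ?_⟩
    · linarith [hxw.1]
    · linarith [hxw.2.trans_le (min_le_left _ _)]
    · have hfract : Int.fract x = x - m := by
        rw [← Int.fract_sub_intCast x m, Int.fract_eq_self]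
        exact ⟨(Int.fract_nonneg w).trans hxw.1.le, hxw.2.trans_le (min_le_right _ _)⟩
      exact hD (by rw [baireCode, hfract]; exact decode_mem_cylinder hxp)
  have hp := codeInterval_lt g' n'
  refine ⟨m + (p.1 + p.2) / 2, (hV _ ?_).1,
    interior_maximal (fun x hx => (hV x hx).2) isOpen_Ioo ?_⟩ <;>
  exact ⟨by linarith, by linarith⟩

theorem exists_forall_mem_dense_open_of_mk_lt_covMeager {ι : Type} {D : ι → Set (ℕ → ℕ)}
    (hι : #ι < covMeager) (hDo : ∀ i, IsOpen (D i)) (hDd : ∀ i, Dense (D i)) :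
    ∃ g, ∀ i, g ∈ D i :=
  let ⟨r, hr⟩ := exists_forall_mem_residual_of_mk_lt_covMeager
    (fun i => preimage_baireCode_mem_residual (hDo i) (hDd i)) hι
  ⟨baireCode r, hr⟩

end BaireSpace

section Alice

variable {X : Type*} [TopologicalSpace X]

lemma IsNetwork.nonempty [Nonempty X] {𝒩 : Set (Set X)} (h : IsNetwork 𝒩) : 𝒩.Nonempty :=
  let ⟨N, hN, _⟩ := h (Classical.arbitrary X) Set.univ isOpen_univ trivial
  ⟨N, hN⟩

variable [Nonempty X] (α : RAliceStrategy X) (hα : ∀ n h, α n h ∈ CtblNetwork X)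

noncomputable def aliceEnum (n : ℕ) (h : Fin n → Set X) : ℕ → Set X :=
  ((hα n h).1.exists_eq_range (hα n h).2.nonempty).choose

lemma range_aliceEnum (n : ℕ) (h : Fin n → Set X) : range (aliceEnum α hα n h) = α n h :=
  ((hα n h).1.exists_eq_range (hα n h).2.nonempty).choose_spec.symm

noncomputable def codedPlay (g : ℕ → ℕ) (n : ℕ) : Set X :=
  aliceEnum α hα n (fun i : Fin n => codedPlay g i) (g n)

lemma codedPlay_mem (g : ℕ → ℕ) (n : ℕ) :
    codedPlay α hα g n ∈ α n (fun i : Fin n => codedPlay α hα g i) := by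
  rw [← range_aliceEnum α hα, codedPlay]
  exact mem_range_self _

lemma codedPlay_congr {g g' : ℕ → ℕ} (n : ℕ) (h : g' ∈ cylinder g (n + 1)) :
    codedPlay α hα g' n = codedPlay α hα g n := by
  induction n using Nat.strong_induction_on with
  | _ n ih =>
    have hhist : (fun i : Fin n => codedPlay α hα g' i) = fun i : Fin n => codedPlay α hα g i :=
      funext fun i => ih i i.2 (cylinder_anti _ (by omega) h)
    rw [codedPlay, codedPlay, hhist, h n n.lt_succ_self]

def captureSet (x : X) (U : Set X) : Set (ℕ → ℕ) :=
  {g | ∃ n, x ∈ codedPlay α hα g n ∧ codedPlay α hα g n ⊆ U}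

lemma isOpen_captureSet (x : X) (U : Set X) : IsOpen (captureSet α hα x U) := by
  refine isOpen_iff_forall_mem_open.2 fun g ⟨n, hn⟩ =>
    ⟨cylinder g (n + 1), fun g' hg' => ⟨n, ?_⟩, isOpen_cylinder _ g _, self_mem_cylinder g _⟩
  rwa [codedPlay_congr α hα n hg']

lemma dense_captureSet {x : X} {U : Set X} (hU : IsOpen U) (hx : x ∈ U) :
    Dense (captureSet α hα x U) := by
  refine (isTopologicalBasis_cylinders _).dense_iff.2 ?_
  rintro _ ⟨g, n, rfl⟩ -
  obtain ⟨N, hN, hxN, hNU⟩ := (hα n fun i : Fin n => codedPlay α hα g i).2 x U hU hx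
  rw [← range_aliceEnum α hα] at hN
  obtain ⟨k, rfl⟩ := hN
  have hg' : Function.update g n k ∈ cylinder g n := update_mem_cylinder g n k
  have hhist : (fun i : Fin n => codedPlay α hα (Function.update g n k) i) =
      fun i : Fin n => codedPlay α hα g i :=
    funext fun i => codedPlay_congr α hα i (cylinder_anti _ i.2 hg')
  have hplay : codedPlay α hα (Function.update g n k) n =
      aliceEnum α hα n (fun i : Fin n => codedPlay α hα g i) k := by
    rw [codedPlay, hhist, Function.update_self]
  exact ⟨_, hg', n, hplay ▸ hxN, hplay ▸ hNU⟩

end Alice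

theorem not_rAliceWins_of_mk_lt_covMeager {X : Type} [TopologicalSpace X]
    [SecondCountableTopology X] [Nonempty X] (hX : #X < covMeager) : ¬ RAliceWins X := by
  rintro ⟨α, hα, hlose⟩
  let ι := {p : X × countableBasis X // p.1 ∈ (p.2 : Set X)}
  have hι : #ι < covMeager := by
    refine mk_subtype_le _ |>.trans_lt ?_
    rw [mk_prod, lift_id, lift_id]
    exact mul_lt_of_lt aleph0_lt_covMeager.le hX
      ((countable_countableBasis X).le_aleph0.trans_lt aleph0_lt_covMeager)
  obtain ⟨g, hg⟩ := exists_forall_mem_dense_open_of_mk_lt_covMeager hι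
    (fun p => isOpen_captureSet α hα p.1.1 p.1.2)
    (fun p => dense_captureSet α hα (isOpen_of_mem_countableBasis p.1.2.2) p.2)
  refine hlose (codedPlay α hα g) (codedPlay_mem α hα g) fun x U hU hx => ?_
  obtain ⟨b, hb, hxb, hbU⟩ := (isBasis_countableBasis X).exists_subset_of_mem_open hx hU
  obtain ⟨n, hxn, hn⟩ := hg ⟨(x, ⟨b, hb⟩), hxb⟩
  exact ⟨_, mem_range_self n, hxn, hn.trans hbU⟩

section Bob

variable {X : Type*} [TopologicalSpace X]

lemma RBobWinning.mem_last {σ : RBobStrategy X} (hσ : RBobWinning σ) {n : ℕ}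
    (H : Fin (n + 1) → Set (Set X)) (hH : ∀ i, H i ∈ CtblNetwork X) : σ n H ∈ H (Fin.last n) := by
  have h := (hσ (fun k => H ⟨min k n, by omega⟩) fun k => hH _).1 n
  have hH' : (fun i : Fin (n + 1) => H ⟨min i n, by omega⟩) = H :=
    funext fun i => congrArg H (Fin.ext (min_eq_left (Nat.lt_succ_iff.1 i.2)))
  simp only [hH', min_self] at h
  exact h

lemma Fin.snoc_val_restrict {α : Type*} (x : ℕ → α) (n : ℕ) :
    Fin.snoc (α := fun _ => α) (fun i : Fin n => x i) (x n) = fun i : Fin (n + 1) => x i :=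
  Fin.snoc_init_self (fun i : Fin (n + 1) => x i)

variable [SecondCountableTopology X]

def isolatingNetwork (x : X) : Set (Set X) := insert {x} {N ∈ countableBasis X | x ∉ N}

lemma isolatingNetwork_mem [T1Space X] (x : X) : isolatingNetwork x ∈ CtblNetwork X := by
  refine ⟨((countable_countableBasis X).mono (sep_subset _ _)).insert _, fun y U hU hy => ?_⟩
  by_cases hyx : y = x
  · exact ⟨{x}, mem_insert _ _, hyx, singleton_subset_iff.2 (hyx ▸ hy)⟩
  obtain ⟨N, hN, hyN, hNU⟩ := (isBasis_countableBasis X).exists_subset_of_mem_open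
    (show y ∈ U \ {x} from ⟨hy, hyx⟩) (hU.sdiff isClosed_singleton)
  exact ⟨N, mem_insert_of_mem _ ⟨hN, fun hxN => (hNU hxN).2 rfl⟩, hyN,
    fun z hz => (hNU hz).1⟩

variable (σ : RBobStrategy X)

def reply {n : ℕ} (h : Fin n → X) (x : X) : Set X :=
  σ n fun i => isolatingNetwork (Fin.snoc (α := fun _ => X) h x i)

lemma reply_mem [T1Space X] (hσ : RBobWinning σ) {n : ℕ} (h : Fin n → X) (x : X) :
    reply σ h x ∈ isolatingNetwork x := by
  simpa [reply] using hσ.mem_last (fun i => isolatingNetwork (Fin.snoc (α := fun _ => X) h x i))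
    fun _ => isolatingNetwork_mem _

variable [Nonempty X]

noncomputable def singletonRep {n : ℕ} (h : Fin n → X) : X :=
  Classical.epsilon fun x => reply σ h x = {x}

noncomputable def replyRep {n : ℕ} (h : Fin n → X) (N : Set X) : X :=
  Classical.epsilon fun x => reply σ h x = N

lemma reply_singletonRep {n : ℕ} {h : Fin n → X} (hs : ∃ x, reply σ h x = {x}) :
    reply σ h (singletonRep σ h) = {singletonRep σ h} :=
  Classical.epsilon_spec hs

lemma reply_replyRep {n : ℕ} (h : Fin n → X) (y : X) :
    reply σ h (replyRep σ h (reply σ h y)) = reply σ h y :=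
  Classical.epsilon_spec (p := fun x => reply σ h x = reply σ h y) ⟨y, rfl⟩

def candidates {n : ℕ} (h : Fin n → X) : Set X :=
  insert (singletonRep σ h) (replyRep σ h '' countableBasis X)

def historyTree : (n : ℕ) → Set (Fin n → X)
  | 0 => Set.univ
  | n + 1 => ⋃ h ∈ historyTree n, Fin.snoc h '' candidates σ h

lemma historyTree_countable : ∀ n, (historyTree σ n).Countable
  | 0 => Set.to_countable _
  | n + 1 => (historyTree_countable n).biUnion fun _ _ =>
      (((countable_countableBasis X).image _).insert _).image _

noncomputable def counterMove (y : X) {n : ℕ} (h : Fin n → X) : X :=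
  open Classical in
  if ∃ x, reply σ h x = {x} then singletonRep σ h else replyRep σ h (reply σ h y)

variable [T1Space X] {σ}

lemma counterMove_mem_candidates (hσ : RBobWinning σ) (y : X) {n : ℕ} (h : Fin n → X) :
    counterMove σ y h ∈ candidates σ h := by
  unfold counterMove
  split_ifs with hs
  · exact mem_insert _ _
  · refine mem_insert_of_mem _ (mem_image_of_mem _ ?_)
    exact ((reply_mem σ hσ h y).resolve_left fun hy => hs ⟨y, hy⟩).1

lemma notMem_reply_counterMove (hσ : RBobWinning σ) {y : X} {n : ℕ} {h : Fin n → X}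
    (hy : y ≠ singletonRep σ h) :
    y ∉ reply σ h (counterMove σ y h) := by
  unfold counterMove
  split_ifs with hs
  · rwa [reply_singletonRep σ hs, mem_singleton_iff]
  · rw [reply_replyRep]
    exact ((reply_mem σ hσ h y).resolve_left fun hy => hs ⟨y, hy⟩).2

variable (σ) in
noncomputable def counterPlay (y : X) (n : ℕ) : X :=
  counterMove σ y fun i : Fin n => counterPlay y i

lemma counterPlay_history_mem (hσ : RBobWinning σ) (y : X) :
    ∀ n, (fun i : Fin n => counterPlay σ y i) ∈ historyTree σ n
  | 0 => mem_univ _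
  | n + 1 => by
    rw [← Fin.snoc_val_restrict]
    refine mem_biUnion (counterPlay_history_mem hσ y n) (mem_image_of_mem _ ?_)
    rw [counterPlay]
    exact counterMove_mem_candidates hσ y _

end Bob

theorem not_rBobWins_of_uncountable {X : Type*} [TopologicalSpace X] [T1Space X]
    [SecondCountableTopology X] [Uncountable X] : ¬ RBobWins X := by
  rintro ⟨σ, hσ⟩
  have hC : (⋃ n, singletonRep σ '' historyTree σ n).Countable :=
    countable_iUnion fun n => (historyTree_countable σ n).image _
  obtain ⟨y, -, hy⟩ := not_subset.1 fun h => not_countable_univ (hC.mono h)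
  obtain ⟨_, ⟨n, rfl⟩, hyn, -⟩ :=
    (hσ _ fun n => isolatingNetwork_mem (counterPlay σ y n)).2 y Set.univ isOpen_univ trivial
  have hyn' : y ∈ reply σ (fun i : Fin n => counterPlay σ y i) (counterPlay σ y n) := by
    rwa [reply, Fin.snoc_val_restrict]
  rw [counterPlay] at hyn'
  exact notMem_reply_counterMove hσ
    (fun h => hy (mem_iUnion.2 ⟨n, _, counterPlay_history_mem hσ y n, h.symm⟩)) hyn'

theorem stmt6 (hcov : Cardinal.aleph 1 < covMeager) (X : Set ℝ)
    (hX : Cardinal.mk X = Cardinal.aleph 1) :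
    ¬ RAliceWins X ∧ ¬ RBobWins X := by
  have : Uncountable X := aleph0_lt_mk_iff.1 (hX ▸ aleph0_lt_aleph_one)
  exact ⟨not_rAliceWins_of_mk_lt_covMeager (hX ▸ hcov), not_rBobWins_of_uncountable⟩
end

section
/- Assume Martin's Axiom holds for all cardinals below the dominating number 𝔡. Let X be a Hausdorff space with countable network weight. If |X| < 𝔡 and w(X) < 𝔡, then Alice does not have a winning strategy in the M-nw-selective game on X. -/
open Set Cardinal TopologicalSpace

/-!
Fix a strategy `α` for Alice. Partial legal plays against `α`, ordered by extension, form a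
countable poset: each of Alice's moves is a countable network and Bob answers with a finite
subset of it. A countable poset is ccc, so Martin's Axiom below `𝔡` applies to it. Take a basis
`B` with `|B| < 𝔡`; the requirements "the play has length at least `k`" and "some selected set
`N` satisfies `x ∈ N ⊆ U`" for `x ∈ U ∈ B` are dense, and there are at most `ℵ₀ + |X| · |B| < 𝔡`
of them because `𝔡` is uncountable. A filter meeting all of them glues to an infinite legal
play whose selections form a network, so `α` is not winning.
-/

open Filter Function

lemma Set.Countable.setOf_finset_subset {β : Type*} {s : Set β} (hs : s.Countable) :
    {F : Finset β | ↑F ⊆ s}.Countable :=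
  ((countable_ofPred_finite_subset hs).preimage Finset.coe_injective).mono
    fun F hF => by exact ⟨F.finite_toSet, hF⟩

lemma exists_forall_eventually_lt (e : ℕ → ℕ → ℕ) :
    ∃ g : ℕ → ℕ, ∀ k, ∀ᶠ n in atTop, e k n < g n := by
  refine ⟨fun n => ∑ k ∈ Finset.range (n + 1), e k n + 1, fun k => ?_⟩
  filter_upwards [eventually_ge_atTop k] with n hkn
  exact Nat.lt_succ_of_le (Finset.single_le_sum (f := fun j => e j n) (fun _ _ => Nat.zero_le _)
    (Finset.mem_range.2 (Nat.lt_succ_of_le hkn)))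

lemma aleph0_lt_domNumber : ℵ₀ < domNumber := by
  unfold domNumber
  refine Order.succ_le_iff.1
    (le_csInf ⟨_, univ, fun g => ⟨g, mem_univ g, .of_forall fun _ => le_rfl⟩, rfl⟩ ?_)
  rintro _ ⟨D, hD, rfl⟩
  refine Order.succ_le_of_lt (lt_of_not_ge fun hle => ?_)
  obtain ⟨f, hf, -⟩ := hD 0
  obtain ⟨e, rfl⟩ := (le_aleph0_iff_set_countable.1 hle).exists_eq_range ⟨f, hf⟩
  obtain ⟨g, hg⟩ := exists_forall_eventually_lt e
  obtain ⟨_, ⟨k, rfl⟩, hk⟩ := hD g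
  obtain ⟨n, hkn, hgn⟩ := (hk.and (hg k)).exists
  exact hkn.not_gt hgn

lemma exists_isTopologicalBasis_mk_eq_topWeight (X : Type*) [TopologicalSpace X] :
    ∃ B : Set (Set X), IsTopologicalBasis B ∧ #B = topWeight X :=
  csInf_mem (s := {c | ∃ B : Set (Set X), IsTopologicalBasis B ∧ #B = c})
    ⟨_, _, isTopologicalBasis_opens, rfl⟩

lemma isNetwork_of_isTopologicalBasis {X : Type*} [TopologicalSpace X] {B 𝒩 : Set (Set X)}
    (hB : IsTopologicalBasis B) (h : ∀ U ∈ B, ∀ x ∈ U, ∃ N ∈ 𝒩, x ∈ N ∧ N ⊆ U) :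
    IsNetwork 𝒩 := fun x U hU hxU => by
  obtain ⟨V, hVB, hxV, hVU⟩ := hB.exists_subset_of_mem_open hxU hU
  obtain ⟨N, hN, hxN, hNV⟩ := h V hVB x hxV
  exact ⟨N, hN, hxN, hNV.trans hVU⟩

section MartinsAxiom

variable {P Q : Type*} [Preorder P] [Preorder Q]

lemma PosetDense.preimage_orderIso (e : P ≃o Q) {D : Set Q} (hD : PosetDense D) :
    PosetDense (e ⁻¹' D) := fun p => by
  obtain ⟨q, hq, hqp⟩ := hD (e p)
  exact ⟨e.symm q, by simpa using hq, e.symm_apply_le.2 hqp⟩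

lemma PosetFilter.preimage_orderIso (e : P ≃o Q) {F : Set Q} (hF : PosetFilter F) :
    PosetFilter (e ⁻¹' F) := by
  obtain ⟨⟨q, hq⟩, hup, hdir⟩ := hF
  refine ⟨⟨e.symm q, by simpa using hq⟩, fun p hp p' hpp' => hup _ hp _ (e.monotone hpp'),
    fun p hp p' hp' => ?_⟩
  obtain ⟨r, hr, hrp, hrp'⟩ := hdir _ hp _ hp'
  exact ⟨e.symm r, by simpa using hr, e.symm_apply_le.2 hrp, e.symm_apply_le.2 hrp'⟩

/-- `MartinsAxiomBelow` only quantifies over posets in `Type`; a countable poset in any universe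
is order isomorphic to one there. -/
lemma MartinsAxiomBelow.exists_filter_of_countable {c : Cardinal} (hMA : MartinsAxiomBelow c)
    [Nonempty P] [Countable P] (𝒟 : Set (Set P)) (hdense : ∀ D ∈ 𝒟, PosetDense D)
    (hcard : #𝒟 < lift c) : ∃ F : Set P, PosetFilter F ∧ ∀ D ∈ 𝒟, (F ∩ D).Nonempty := by
  let e := orderIsoShrink.{0} P
  have : Countable (Shrink.{0} P) := e.symm.injective.countable
  obtain ⟨F, hF, hmeet⟩ := hMA (Shrink P) ⟨e (Classical.arbitrary P)⟩ (fun A _ => A.to_countable)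
    ((e.symm ⁻¹' ·) '' 𝒟) (forall_mem_image.2 fun D hD => (hdense D hD).preimage_orderIso e.symm)
    (lift_lt.1 (mk_image_le_lift.trans_lt (by simpa using hcard)))
  refine ⟨e ⁻¹' F, hF.preimage_orderIso e, fun D hD => ?_⟩
  obtain ⟨y, hyF, hyD⟩ := hmeet _ (mem_image_of_mem _ hD)
  exact ⟨e.symm y, by simpa using hyF, hyD⟩

end MartinsAxiom

lemma prefix_update_of_le {β : Type*} (f : ℕ → β) {i n : ℕ} (hin : i ≤ n) (a : β) :
    (fun j : Fin i => update f n a j) = fun j : Fin i => f j :=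
  funext fun j => update_of_ne (j.2.trans_le hin).ne _ _

section Plays

variable {X : Type*} [TopologicalSpace X] (α : MAliceStrategy X)

/-- `f` is a legal play of length `n` against `α`, padded with `∅` from `n` on (the padding
makes plays of a given length a countable set). -/
def IsLegalPlay (n : ℕ) (f : ℕ → Finset (Set X)) : Prop :=
  (∀ i < n, ↑(f i) ⊆ α i (fun j : Fin i => f j)) ∧ ∀ i ≥ n, f i = ∅

variable {α}

lemma IsLegalPlay.mono {n m : ℕ} {f : ℕ → Finset (Set X)} (hf : IsLegalPlay α n f)
    (hnm : n ≤ m) : IsLegalPlay α m f := by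
  refine ⟨fun i _ => ?_, fun i hi => hf.2 i (hnm.trans hi)⟩
  rcases lt_or_ge i n with hin | hin
  · exact hf.1 i hin
  · simp [hf.2 i hin]

lemma IsLegalPlay.extend {n : ℕ} {f : ℕ → Finset (Set X)} (hf : IsLegalPlay α n f)
    {F : Finset (Set X)} (hF : ↑F ⊆ α n fun j : Fin n => f j) :
    IsLegalPlay α (n + 1) (update f n F) := by
  refine ⟨fun i hi => ?_, fun i hi => ?_⟩
  · rw [prefix_update_of_le f (Nat.le_of_lt_succ hi)]
    rcases (Nat.le_of_lt_succ hi).lt_or_eq with hin | rfl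
    · rw [update_of_ne hin.ne]
      exact hf.1 i hin
    · rwa [update_self]
  · rw [update_of_ne (by omega)]
    exact hf.2 i (by omega)

lemma IsLegalPlay.eraseLast {n : ℕ} {f : ℕ → Finset (Set X)} (hf : IsLegalPlay α (n + 1) f) :
    IsLegalPlay α n (update f n ∅) := by
  refine ⟨fun i hi => ?_, fun i hi => ?_⟩
  · rw [prefix_update_of_le f hi.le, update_of_ne hi.ne]
    exact hf.1 i (hi.trans n.lt_succ_self)
  · rcases hi.lt_or_eq with hni | rfl
    · rw [update_of_ne hni.ne']
      exact hf.2 i hni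
    · exact update_self _ _ _

variable (α) in
lemma countable_setOf_isLegalPlay (hα : ∀ n h, (α n h).Countable) (n : ℕ) :
    {f | IsLegalPlay α n f}.Countable := by
  induction n with
  | zero =>
    exact (countable_singleton fun _ => ∅).mono fun f hf => funext fun i => hf.2 i i.zero_le
  | succ n ih =>
    refine (ih.biUnion fun g _ =>
      ((hα n fun j : Fin n => g j).setOf_finset_subset.image (update g n))).mono fun f hf => ?_
    refine mem_biUnion hf.eraseLast ⟨f n, ?_, by simp⟩
    rw [mem_ofPred_eq, prefix_update_of_le f le_rfl]
    exact hf.1 n n.lt_succ_self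

variable (α) in
structure FinitePlay where
  len : ℕ
  moves : ℕ → Finset (Set X)
  legal : IsLegalPlay α len moves

namespace FinitePlay

/-- `c ≤ d` when `c` extends `d`. -/
instance : Preorder (FinitePlay α) where
  le c d := d.len ≤ c.len ∧ ∀ i < d.len, c.moves i = d.moves i
  le_refl c := ⟨le_rfl, fun _ _ => rfl⟩
  le_trans _ _ _ hab hbc :=
    ⟨hbc.1.trans hab.1, fun i hi => (hab.2 i (hi.trans_le hbc.1)).trans (hbc.2 i hi)⟩

instance : Nonempty (FinitePlay α) :=
  ⟨⟨0, fun _ => ∅, fun i hi => absurd hi i.not_lt_zero, fun _ _ => rfl⟩⟩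

lemma countable (hα : ∀ n h, (α n h).Countable) : Countable (FinitePlay α) := by
  have (n : ℕ) : Countable {f // IsLegalPlay α n f} :=
    (countable_setOf_isLegalPlay α hα n).to_subtype
  refine Injective.countable
    (f := fun c : FinitePlay α => (⟨c.len, c.moves, c.legal⟩ : Σ n, {f // IsLegalPlay α n f})) ?_
  rintro ⟨⟩ ⟨⟩ ⟨⟩
  rfl

variable (α) in
def longPlays (k : ℕ) : Set (FinitePlay α) := {c | k ≤ c.len}

variable (α) in
def capturing (x : X) (U : Set X) : Set (FinitePlay α) :=
  {c | ∃ i < c.len, ∃ N ∈ c.moves i, x ∈ N ∧ N ⊆ U}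

lemma posetDense_longPlays (k : ℕ) : PosetDense (longPlays α k) := fun c =>
  ⟨⟨max c.len k, c.moves, c.legal.mono (le_max_left _ _)⟩, (le_max_right _ _ : k ≤ max c.len k),
    le_max_left _ _, fun _ _ => rfl⟩

lemma posetDense_capturing (hα : ∀ n h, IsNetwork (α n h)) {x : X} {U : Set X} (hU : IsOpen U)
    (hxU : x ∈ U) : PosetDense (capturing α x U) := fun c => by
  obtain ⟨N, hN, hxN, hNU⟩ := hα c.len _ x U hU hxU
  exact ⟨⟨c.len + 1, update c.moves c.len {N}, c.legal.extend (by simpa using hN)⟩,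
    ⟨c.len, c.len.lt_succ_self, N, by simp, hxN, hNU⟩, c.len.le_succ,
    fun i hi => update_of_ne hi.ne _ _⟩

lemma moves_eq_of_mem_filter {G : Set (FinitePlay α)} (hG : PosetFilter G) {c d : FinitePlay α}
    (hc : c ∈ G) (hd : d ∈ G) {i : ℕ} (hic : i < c.len) (hid : i < d.len) :
    c.moves i = d.moves i := by
  obtain ⟨r, -, hrc, hrd⟩ := hG.2.2 c hc d hd
  exact (hrc.2 i hic).symm.trans (hrd.2 i hid)

lemma exists_run_of_filter {G : Set (FinitePlay α)} (hG : PosetFilter G)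
    (hlong : ∀ k, (G ∩ longPlays α k).Nonempty) :
    ∃ b : ℕ → Finset (Set X), (∀ n, ↑(b n) ⊆ α n fun i : Fin n => b i) ∧
      ∀ c ∈ G, ∀ i < c.len, b i = c.moves i := by
  choose c hcG hclen using hlong
  have hb (d) (hd : d ∈ G) (i) (hi : i < d.len) : (c (i + 1)).moves i = d.moves i :=
    moves_eq_of_mem_filter hG (hcG _) hd (hclen (i + 1)) hi
  refine ⟨fun n => (c (n + 1)).moves n, fun n => ?_, hb⟩
  rw [funext fun i : Fin n => hb _ (hcG (n + 1)) i (i.2.trans (hclen (n + 1)))]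
  exact (c (n + 1)).legal.1 n (hclen (n + 1))

variable (α) in
def requirements (B : Set (Set X)) : Set (Set (FinitePlay α)) :=
  range (longPlays α) ∪ (fun q : X × B => capturing α q.1 q.2) '' {q | q.1 ∈ (q.2 : Set X)}

lemma posetDense_of_mem_requirements (hα : ∀ n h, IsNetwork (α n h)) {B : Set (Set X)}
    (hB : ∀ U ∈ B, IsOpen U) : ∀ D ∈ requirements α B, PosetDense D := by
  rintro _ (⟨k, rfl⟩ | ⟨⟨x, U⟩, hxU, rfl⟩)
  · exact posetDense_longPlays k
  · exact posetDense_capturing hα (hB U U.2) hxU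

lemma mk_requirements_lt {B : Set (Set X)} {κ : Cardinal} (hκ : ℵ₀ < κ) (hX : #X < κ)
    (hB : #B < κ) : #(requirements α B) < κ := by
  have hlong : #(range (longPlays α)) ≤ ℵ₀ := le_aleph0_iff_set_countable.2 (countable_range _)
  have hcapt : #((fun q : X × B => capturing α q.1 q.2) '' {q | q.1 ∈ (q.2 : Set X)}) ≤ #X * #B :=
    mk_image_le.trans ((mk_set_le _).trans (by simp [mk_prod]))
  exact (mk_union_le _ _).trans_lt (add_lt_of_lt hκ.le (hlong.trans_lt hκ)
    (hcapt.trans_lt (mul_lt_of_lt hκ.le hX hB)))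

end FinitePlay

end Plays

universe u
theorem stmt10_general (hMA : MartinsAxiomBelow domNumber)
    {X : Type u} [TopologicalSpace X]
    (hcard : Cardinal.mk X < Cardinal.lift.{u} domNumber)
    (hw : topWeight X < Cardinal.lift.{u} domNumber) :
    ¬ MAliceWins X := by
  rintro ⟨α, hα, hwin⟩
  obtain ⟨B, hB, hBw⟩ := exists_isTopologicalBasis_mk_eq_topWeight X
  have := FinitePlay.countable fun n h => (hα n h).1
  obtain ⟨G, hG, hmeet⟩ := hMA.exists_filter_of_countable (FinitePlay.requirements α B)
    (FinitePlay.posetDense_of_mem_requirements (fun n h => (hα n h).2) fun _ => hB.isOpen)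
    (FinitePlay.mk_requirements_lt (aleph0_lt_lift.2 aleph0_lt_domNumber) hcard (hBw ▸ hw))
  obtain ⟨b, hlegal, hb⟩ :=
    FinitePlay.exists_run_of_filter hG fun k => hmeet _ (Or.inl (mem_range_self k))
  refine hwin b hlegal (isNetwork_of_isTopologicalBasis hB fun U hU x hxU => ?_)
  obtain ⟨c, hcG, i, hi, N, hN, hxN, hNU⟩ := hmeet _ (Or.inr ⟨(x, ⟨U, hU⟩), hxU, rfl⟩)
  exact ⟨N, mem_iUnion.2 ⟨i, by rwa [Finset.mem_coe, hb c hcG i hi]⟩, hxN, hNU⟩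

theorem stmt10 (hMA : MartinsAxiomBelow domNumber)
    {X : Type u} [TopologicalSpace X] [T2Space X]
    (hnw : (CtblNetwork X).Nonempty)
    (hcard : Cardinal.mk X < Cardinal.lift.{u} domNumber)
    (hw : topWeight X < Cardinal.lift.{u} domNumber) :
    ¬ MAliceWins X :=
  stmt10_general hMA hcard hw
end

section
/- If X is a regular (T3) space in which Bob has a winning strategy in the M-nw-selective game, then X is σ-compact. -/
open Set Cardinal TopologicalSpace

/-! Fix a countable network `𝒩` of closed sets and let Alice play only subnetworks of `𝒩`.
For a position `H` at inning `n`, the points that Bob's answer covers whatever Alice plays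
form a closed set `K`, and `K` is compact: against an ultrafilter on `K` without a limit in `K`,
Alice could play the subnetwork of members of `𝒩` outside the ultrafilter, and Bob's finite
answer would cover `K` by sets none of which belongs to it. Bob's answers are finite subsets of
the countable `𝒩`, so countably many positions suffice to realise all sequences of answers; if a
point `x` escaped all their kernels, Alice could steer the game through these positions so that
no answer of Bob contains `x`, and Bob would lose. -/

open Filter Function Topology

section Network

variable {X : Type*} [TopologicalSpace X] {𝒩 : Set (Set X)}

def subnetworks (𝒩 : Set (Set X)) : Set (Set (Set X)) :=
  {A | A ⊆ 𝒩 ∧ IsNetwork A}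

theorem subnetworks_subset_ctblNetwork (h𝒩 : 𝒩.Countable) : subnetworks 𝒩 ⊆ CtblNetwork X :=
  fun _ hA => ⟨h𝒩.mono hA.1, hA.2⟩

theorem IsNetwork.image_closure [RegularSpace X] (h : IsNetwork 𝒩) :
    IsNetwork (closure '' 𝒩) := by
  intro x U hU hx
  obtain ⟨V, hV, hVc, hVU⟩ := exists_mem_nhds_isClosed_subset (hU.mem_nhds hx)
  obtain ⟨N, hN, hxN, hNV⟩ :=
    h x (interior V) isOpen_interior (mem_interior_iff_mem_nhds.mpr hV)
  exact ⟨closure N, mem_image_of_mem _ hN, subset_closure hxN,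
    (closure_minimal (hNV.trans interior_subset) hVc).trans hVU⟩

theorem IsNetwork.sep (h : IsNetwork 𝒩) {p : Set X → Prop}
    (hp : ∀ x, ∀ᶠ N in (𝓝 x).smallSets, p N) : IsNetwork {N ∈ 𝒩 | p N} := by
  intro x U hU hx
  obtain ⟨V, hV, hVp⟩ :=
    eventually_smallSets.mp ((hp x).and (eventually_smallSets_subset.mpr (hU.mem_nhds hx)))
  obtain ⟨N, hN, hxN, hNV⟩ :=
    h x (interior V) isOpen_interior (mem_interior_iff_mem_nhds.mpr hV)
  obtain ⟨hpN, hNU⟩ := hVp N (hNV.trans interior_subset)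
  exact ⟨N, ⟨hN, hpN⟩, hxN, hNU⟩

theorem IsNetwork.isCompact_of_forall_subnetworks (h : IsNetwork 𝒩) {K : Set X}
    (hK : IsClosed K) (hcover : ∀ A ∈ subnetworks 𝒩, ∃ F ⊆ A, F.Finite ∧ K ⊆ ⋃₀ F) :
    IsCompact K := by
  refine isCompact_iff_ultrafilter_le_nhds.mpr fun f hf => ?_
  by_contra! hlim
  have hKf : K ∈ f := le_principal_iff.mp hf
  have hA : IsNetwork {N ∈ 𝒩 | N ∉ f} := by
    refine h.sep fun x => eventually_smallSets.mpr ?_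
    obtain ⟨U, hU, hUf⟩ : ∃ U ∈ 𝓝 x, U ∉ f := by
      by_cases hx : x ∈ K
      · exact Filter.not_le.mp (hlim x hx)
      · exact ⟨Kᶜ, hK.isOpen_compl.mem_nhds hx, Ultrafilter.compl_notMem_iff.mpr hKf⟩
    exact ⟨U, hU, fun N hNU hN => hUf (mem_of_superset hN hNU)⟩
  obtain ⟨F, hFA, hF, hKF⟩ := hcover _ ⟨sep_subset _ _, hA⟩
  obtain ⟨N, hNF, hNf⟩ := (Ultrafilter.finite_sUnion_mem_iff hF).mp (mem_of_superset hKf hKF)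
  exact (hFA hNF).2 hNf

end Network

namespace MBobStrategy

variable {X : Type*} [TopologicalSpace X] (σ : MBobStrategy X)

/-- Bob's answer when Alice has played `H 0, …, H (n - 1)` and now plays `A`; the values of
`H` from `n` on are irrelevant. -/
def reply (H : ℕ → Set (Set X)) (n : ℕ) (A : Set (Set X)) : Finset (Set X) :=
  σ n fun i => update H n A i

variable {σ}

theorem reply_subset (hσ : MBobWinning σ) {H : ℕ → Set (Set X)}
    (hH : ∀ k, H k ∈ CtblNetwork X) {A : Set (Set X)} (hA : A ∈ CtblNetwork X) (n : ℕ) :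
    ↑(σ.reply H n A) ⊆ A := by
  have hrun : ∀ k, update H n A k ∈ CtblNetwork X := by
    intro k
    rcases eq_or_ne k n with rfl | hk
    · simpa using hA
    · simpa [hk] using hH k
  simpa [reply] using (hσ _ hrun).1 n

variable (σ)

def kernel (𝒩 : Set (Set X)) (H : ℕ → Set (Set X)) (n : ℕ) : Set X :=
  ⋂ A ∈ subnetworks 𝒩, ⋃₀ ↑(σ.reply H n A)

variable {σ} {𝒩 : Set (Set X)}

theorem isCompact_kernel (hσ : MBobWinning σ) (h𝒩c : 𝒩.Countable) (h𝒩 : IsNetwork 𝒩)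
    (h𝒩cl : ∀ N ∈ 𝒩, IsClosed N) {H : ℕ → Set (Set X)} (hH : ∀ k, H k ∈ subnetworks 𝒩)
    (n : ℕ) : IsCompact (σ.kernel 𝒩 H n) := by
  have hctbl := subnetworks_subset_ctblNetwork h𝒩c
  have hreply : ∀ A ∈ subnetworks 𝒩, ↑(σ.reply H n A) ⊆ A := fun A hA =>
    reply_subset hσ (fun k => hctbl (hH k)) (hctbl hA) n
  have hclosed : IsClosed (σ.kernel 𝒩 H n) := by
    refine isClosed_biInter fun A hA => ?_
    rw [sUnion_eq_biUnion]
    exact (σ.reply H n A).finite_toSet.isClosed_biUnion fun N hN =>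
      h𝒩cl N (hA.1 (hreply A hA hN))
  exact h𝒩.isCompact_of_forall_subnetworks hclosed fun A hA =>
    ⟨_, hreply A hA, (σ.reply H n A).finite_toSet, biInter_subset_of_mem hA⟩

variable (σ 𝒩)

/-- A subnetwork of `𝒩` to which Bob answers with `c`; junk value `𝒩` if there is none. -/
noncomputable def canonicalMove (H : ℕ → Set (Set X)) (n : ℕ) (c : Finset 𝒩) :
    Set (Set X) :=
  open Classical in
  if h : ∃ A ∈ subnetworks 𝒩, σ.reply H n A = c.map (Embedding.subtype _) then h.choose else 𝒩

/-- The position reached when Bob's answers so far were `t` (most recent first), Alice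
playing canonical moves; it is padded with `𝒩`. -/
noncomputable def canonicalHistory : List (Finset 𝒩) → ℕ → Set (Set X)
  | [] => fun _ => 𝒩
  | c :: t => update (canonicalHistory t) t.length
      (σ.canonicalMove 𝒩 (canonicalHistory t) t.length c)

variable {σ 𝒩}

theorem canonicalMove_mem (h𝒩 : IsNetwork 𝒩) (H : ℕ → Set (Set X)) (n : ℕ) (c : Finset 𝒩) :
    σ.canonicalMove 𝒩 H n c ∈ subnetworks 𝒩 := by
  unfold canonicalMove
  split_ifs with h
  · exact h.choose_spec.1
  · exact ⟨subset_rfl, h𝒩⟩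

theorem reply_canonicalMove {H : ℕ → Set (Set X)} {n : ℕ} {c : Finset 𝒩}
    (h : ∃ A ∈ subnetworks 𝒩, σ.reply H n A = c.map (Embedding.subtype _)) :
    σ.reply H n (σ.canonicalMove 𝒩 H n c) = c.map (Embedding.subtype _) := by
  rw [canonicalMove, dif_pos h]
  exact h.choose_spec.2

theorem canonicalHistory_mem (h𝒩 : IsNetwork 𝒩) :
    ∀ (t : List (Finset 𝒩)) (k : ℕ), σ.canonicalHistory 𝒩 t k ∈ subnetworks 𝒩
  | [], _ => ⟨subset_rfl, h𝒩⟩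
  | c :: t, k => by
    rw [canonicalHistory]
    rcases eq_or_ne k t.length with rfl | hk
    · rw [update_self]
      exact canonicalMove_mem h𝒩 _ _ c
    · rw [update_of_ne hk]
      exact canonicalHistory_mem h𝒩 t k

theorem exists_run_of_code (code : List (Finset 𝒩) → Finset 𝒩) :
    ∃ (m : ℕ → Set (Set X)) (ts : ℕ → List (Finset 𝒩)), ∀ n, (ts n).length = n ∧
      m n = σ.canonicalMove 𝒩 (σ.canonicalHistory 𝒩 (ts n)) n (code (ts n)) ∧
      σ n (fun i => m i) = σ.reply (σ.canonicalHistory 𝒩 (ts n)) n (m n) := by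
  set ts : ℕ → List (Finset 𝒩) := fun n => (fun t => code t :: t)^[n] []
  have hts : ∀ n, ts (n + 1) = code (ts n) :: ts n := fun n => iterate_succ_apply' _ n []
  have hlen : ∀ n, (ts n).length = n := by
    intro n
    induction n with
    | zero => rfl
    | succ n ih => rw [hts, List.length_cons, ih]
  set m : ℕ → Set (Set X) := fun k => σ.canonicalHistory 𝒩 (ts (k + 1)) k
  have hm : ∀ n, m n = σ.canonicalMove 𝒩 (σ.canonicalHistory 𝒩 (ts n)) n (code (ts n)) := by
    intro n
    simp only [m, hts, canonicalHistory, hlen, update_self]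
  have hstable : ∀ n k, k < n → σ.canonicalHistory 𝒩 (ts n) k = m k := by
    intro n
    induction n with
    | zero => intro k hk; omega
    | succ n ih =>
      intro k hk
      rcases Nat.lt_succ_iff_lt_or_eq.mp hk with hk | rfl
      · rw [hts, canonicalHistory, update_of_ne (by rw [hlen]; omega), ih k hk]
      · rfl
  refine ⟨m, ts, fun n => ⟨hlen n, hm n, ?_⟩⟩
  refine congrArg (σ n) (funext fun i => ?_)
  rcases eq_or_ne i.1 n with hi | hi
  · rw [hi, update_self]
  · rw [update_of_ne hi, hstable n i (by omega)]

theorem exists_mem_kernel_canonicalHistory (hσ : MBobWinning σ) (h𝒩c : 𝒩.Countable)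
    (h𝒩 : IsNetwork 𝒩) (x : X) :
    ∃ t : List (Finset 𝒩), x ∈ σ.kernel 𝒩 (σ.canonicalHistory 𝒩 t) t.length := by
  classical
  by_contra! hx
  have hescape : ∀ t : List (Finset 𝒩), ∃ c : Finset 𝒩,
      (∃ A ∈ subnetworks 𝒩,
        σ.reply (σ.canonicalHistory 𝒩 t) t.length A = c.map (Embedding.subtype _)) ∧
      x ∉ ⋃₀ ↑(c.map (Embedding.subtype (· ∈ 𝒩))) := by
    intro t
    obtain ⟨A, hA, hxA⟩ : ∃ A ∈ subnetworks 𝒩,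
        x ∉ ⋃₀ ↑(σ.reply (σ.canonicalHistory 𝒩 t) t.length A) := by
      simpa [kernel] using hx t
    have hsub : ∀ N ∈ σ.reply (σ.canonicalHistory 𝒩 t) t.length A, N ∈ 𝒩 :=
      fun N hN => hA.1 <| reply_subset hσ
        (fun k => subnetworks_subset_ctblNetwork h𝒩c (canonicalHistory_mem h𝒩 t k))
        (subnetworks_subset_ctblNetwork h𝒩c hA) _ hN
    refine ⟨_, ⟨A, hA, (Finset.subtype_map_of_mem hsub).symm⟩, ?_⟩
    rwa [Finset.subtype_map_of_mem hsub]
  choose code hcode hmiss using hescape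
  obtain ⟨m, ts, hrun⟩ := exists_run_of_code (σ := σ) code
  have hanswer : ∀ n, σ n (fun i => m i) = (code (ts n)).map (Embedding.subtype _) := by
    intro n
    obtain ⟨hlen, hm, hσm⟩ := hrun n
    have := reply_canonicalMove (hcode (ts n))
    rwa [hlen, ← hm, ← hσm] at this
  have hm : ∀ n, m n ∈ CtblNetwork X := fun n => by
    rw [(hrun n).2.1]
    exact subnetworks_subset_ctblNetwork h𝒩c (canonicalMove_mem h𝒩 _ _ _)
  obtain ⟨N, hN, hxN, -⟩ := (hσ m hm).2 x univ isOpen_univ (mem_univ x)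
  obtain ⟨n, hNn⟩ := mem_iUnion.mp hN
  rw [hanswer n] at hNn
  exact hmiss (ts n) ⟨N, hNn, hxN⟩

end MBobStrategy

theorem stmt12 {X : Type*} [TopologicalSpace X] [T3Space X]
    (hnw : (CtblNetwork X).Nonempty) (h : MBobWins X) :
    SigmaCompactSpace X := by
  obtain ⟨N₀, hN₀c, hN₀⟩ := hnw
  obtain ⟨σ, hσ⟩ := h
  set 𝒩 := closure '' N₀
  have h𝒩c : 𝒩.Countable := hN₀c.image _
  have h𝒩 : IsNetwork 𝒩 := hN₀.image_closure
  have h𝒩cl : ∀ N ∈ 𝒩, IsClosed N := by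
    rintro _ ⟨M, -, rfl⟩
    exact isClosed_closure
  have : Countable 𝒩 := h𝒩c.to_subtype
  have hcover : ⋃ t : List (Finset 𝒩), σ.kernel 𝒩 (σ.canonicalHistory 𝒩 t) t.length = Set.univ :=
    eq_univ_of_forall fun x =>
      mem_iUnion.mpr (MBobStrategy.exists_mem_kernel_canonicalHistory hσ h𝒩c h𝒩 x)
  rw [← isSigmaCompact_univ_iff, ← hcover]
  exact isSigmaCompact_iUnion_of_isCompact _ fun t =>
    MBobStrategy.isCompact_kernel hσ h𝒩c h𝒩 h𝒩cl (MBobStrategy.canonicalHistory_mem h𝒩 t) _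
end

section
/- If X is a regular space in which Bob has a winning strategy in the M-nw-selective game, then X is a countable union of compact metrizable subspaces. -/
open Set Cardinal TopologicalSpace

/-!
If Bob wins with `σ`, then for every finite history `h` of closed countable networks the set
`σ.capture h` of points that Bob's next answer covers whatever closed countable network Alice
plays is closed (Bob answers finitely many closed sets) and compact: against an open cover,
Alice plays the members of a closed network that miss the set or fit inside one member of the
cover, and Bob's finite answer yields a finite subcover. A compact Hausdorff space with a
countable network is metrizable, so each capture set is compact metrizable. Since the space is
hereditarily Lindelöf, countably many of Alice's replies already determine each capture set;
the capture sets along the resulting countable tree of histories cover the space, for a point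
outside all of them would let Alice dodge it forever and defeat `σ`.
-/

section

variable {X : Type*} [TopologicalSpace X]

namespace IsNetwork

variable {𝒩 : Set (Set X)}

theorem image_closure_s15 [RegularSpace X] (hn : IsNetwork 𝒩) : IsNetwork (closure '' 𝒩) := by
  intro x U hU hxU
  obtain ⟨C, hCx, hC, hCU⟩ := exists_mem_nhds_isClosed_subset (hU.mem_nhds hxU)
  obtain ⟨N, hN, hxN, hNC⟩ := hn x (interior C) isOpen_interior (mem_interior_iff_mem_nhds.2 hCx)
  exact ⟨closure N, mem_image_of_mem _ hN, subset_closure hxN,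
    (closure_minimal (hNC.trans interior_subset) hC).trans hCU⟩

theorem preimage {Y : Type*} [TopologicalSpace Y] {f : Y → X} (hf : Topology.IsInducing f)
    (hn : IsNetwork 𝒩) : IsNetwork ((f ⁻¹' ·) '' 𝒩) := by
  intro y U hU hyU
  obtain ⟨V, hV, rfl⟩ := hf.isOpen_iff.1 hU
  obtain ⟨N, hN, hyN, hNV⟩ := hn (f y) V hV hyU
  exact ⟨f ⁻¹' N, mem_image_of_mem _ hN, hyN, preimage_mono hNV⟩

theorem hereditarilyLindelofSpace (hn : IsNetwork 𝒩) (hc : 𝒩.Countable) :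
    HereditarilyLindelofSpace X := by
  refine ⟨fun s _ => isLindelof_of_countable_subcover fun {ι} U hU hsU => ?_⟩
  let T := {N ∈ 𝒩 | ∃ i, N ⊆ U i}
  have : Countable T := (hc.mono (sep_subset _ _)).to_subtype
  choose c hc' using fun N : T => N.2.2
  refine ⟨range c, countable_range c, fun x hx => ?_⟩
  obtain ⟨i, hi⟩ := mem_iUnion.1 (hsU hx)
  obtain ⟨N, hN, hxN, hNU⟩ := hn x (U i) (hU i) hi
  exact mem_biUnion (mem_range_self ⟨N, hN, i, hNU⟩) (hc' _ hxN)

theorem sep_disjoint_or_subset (hn : IsNetwork 𝒩) {F : Set X} (hF : IsClosed F) {ι : Type*}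
    {U : ι → Set X} (hU : ∀ i, IsOpen (U i)) (hFU : F ⊆ ⋃ i, U i) :
    IsNetwork {N ∈ 𝒩 | Disjoint N F ∨ ∃ i, N ⊆ U i} := by
  intro x V hV hxV
  by_cases hxF : x ∈ F
  · obtain ⟨i, hxU⟩ := mem_iUnion.1 (hFU hxF)
    obtain ⟨N, hN, hxN, hNV⟩ := hn x (V ∩ U i) (hV.inter (hU i)) ⟨hxV, hxU⟩
    exact ⟨N, ⟨hN, Or.inr ⟨i, hNV.trans inter_subset_right⟩⟩, hxN, hNV.trans inter_subset_left⟩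
  · obtain ⟨N, hN, hxN, hNV⟩ := hn x (V ∩ Fᶜ) (hV.inter hF.isOpen_compl) ⟨hxV, hxF⟩
    exact ⟨N, ⟨hN, Or.inl (subset_compl_iff_disjoint_right.1 (hNV.trans inter_subset_right))⟩,
      hxN, hNV.trans inter_subset_left⟩

end IsNetwork

/-- A compact Hausdorff space with a countable network embeds into `ℝ^ℕ`: Urysohn functions
of the countably many pairs of disjoint closed members of the network separate points. -/
theorem metrizableSpace_of_isNetwork [CompactSpace X] [T2Space X] {𝒩 : Set (Set X)}
    (hn : IsNetwork 𝒩) (hc : 𝒩.Countable) : MetrizableSpace X := by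
  let P := {p ∈ (closure '' 𝒩) ×ˢ (closure '' 𝒩) | Disjoint p.1 p.2}
  have : Countable P := (((hc.image _).prod (hc.image _)).mono (sep_subset _ _)).to_subtype
  have hcl : ∀ C ∈ closure '' 𝒩, IsClosed C := by
    rintro _ ⟨N, -, rfl⟩
    exact isClosed_closure
  have hsep (p : P) : ∃ f : C(X, ℝ), EqOn f 0 p.1.1 ∧ EqOn f 1 p.1.2 ∧ ∀ x, f x ∈ Icc 0 1 :=
    exists_continuous_zero_one_of_isClosed (hcl _ p.2.1.1) (hcl _ p.2.1.2) p.2.2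
  choose f hf0 hf1 _ using hsep
  have hinj : Function.Injective fun x (p : P) => f p x := by
    intro x y hxy
    by_contra hne
    obtain ⟨O₁, O₂, hO₁, hO₂, hx, hy, hd⟩ := t2_separation hne
    obtain ⟨M, hM, hxM, hMO⟩ := hn.image_closure_s15 x O₁ hO₁ hx
    obtain ⟨N, hN, hyN, hNO⟩ := hn.image_closure_s15 y O₂ hO₂ hy
    let p : P := ⟨(M, N), ⟨hM, hN⟩, hd.mono hMO hNO⟩
    have hfx : f p x = 0 := hf0 p hxM
    have hfy : f p y = 1 := hf1 p hyN
    exact zero_ne_one (hfx.symm.trans ((congrFun hxy p).trans hfy))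
  exact ((continuous_pi fun p => (f p).continuous).isClosedEmbedding hinj).isEmbedding
    |>.metrizableSpace

def playOf {α : Type*} (F : ∀ n, (Fin n → α) → α) (n : ℕ) : α :=
  F n fun i => playOf F i
termination_by n
decreasing_by exact i.2

def reachable {α : Type*} (g : ∀ n, (Fin n → α) → ℕ → α) : (n : ℕ) → Set (Fin n → α)
  | 0 => univ
  | n + 1 => ⋃ h ∈ reachable g n, range fun m => Fin.snoc h (g n h m)

section Tree

variable {α : Type*}

theorem playOf_eq (F : ∀ n, (Fin n → α) → α) (n : ℕ) : playOf F n = F n fun i => playOf F i := by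
  rw [playOf]

variable (g : ∀ n, (Fin n → α) → ℕ → α)

theorem countable_reachable : ∀ n, (reachable g n).Countable
  | 0 => countable_univ
  | n + 1 => (countable_reachable n).biUnion fun _ _ => countable_range _

theorem mem_of_mem_reachable {S : Set α} (hg : ∀ n h m, g n h m ∈ S) :
    ∀ n, ∀ h ∈ reachable g n, ∀ i, h i ∈ S
  | 0, _, _, i => i.elim0
  | n + 1, _, hmem, i => by
    obtain ⟨h, hh, m, rfl⟩ := mem_iUnion₂.1 hmem
    exact Fin.lastCases (by simpa using hg n h m)
      (fun j => by simpa using mem_of_mem_reachable hg n h hh j) i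

theorem snoc_prefix (a : ℕ → α) (n : ℕ) :
    (Fin.snoc (fun i : Fin n => a i) (a n) : Fin (n + 1) → α) = fun i : Fin (n + 1) => a i :=
  Fin.snoc_init_self (fun i : Fin (n + 1) => a i)

theorem prefix_playOf_mem_reachable (c : ∀ n, (Fin n → α) → ℕ) :
    ∀ n, (fun i : Fin n => playOf (fun k h => g k h (c k h)) i) ∈ reachable g n
  | 0 => mem_univ _
  | n + 1 => by
    rw [← snoc_prefix]
    exact mem_iUnion₂.2 ⟨_, prefix_playOf_mem_reachable c n, _,
      congrArg _ (playOf_eq (fun k h => g k h (c k h)) n).symm⟩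

end Tree

def CtblClosedNetwork (X : Type*) [TopologicalSpace X] : Set (Set (Set X)) :=
  {𝒜 | 𝒜 ∈ CtblNetwork X ∧ ∀ N ∈ 𝒜, IsClosed N}

theorem IsNetwork.image_closure_mem_ctblClosedNetwork [RegularSpace X] {𝒩 : Set (Set X)}
    (hn : IsNetwork 𝒩) (hc : 𝒩.Countable) : closure '' 𝒩 ∈ CtblClosedNetwork X :=
  ⟨⟨hc.image _, hn.image_closure_s15⟩, by rintro _ ⟨N, -, rfl⟩; exact isClosed_closure⟩

def MBobStrategy.capture (σ : MBobStrategy X) {n : ℕ} (h : Fin n → Set (Set X)) : Set X :=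
  ⋂ 𝒜 : CtblClosedNetwork X, ⋃₀ ↑(σ n (Fin.snoc h 𝒜))

namespace MBobWinning

variable {σ : MBobStrategy X} (hσ : MBobWinning σ) {n : ℕ} {h : Fin n → Set (Set X)}
include hσ

theorem subset_last {h : Fin (n + 1) → Set (Set X)} (hh : ∀ i, h i ∈ CtblNetwork X) :
    ↑(σ n h) ⊆ h (Fin.last n) := by
  -- extend the finite history to a full run by repeating its last move
  have hrun := (hσ (fun k => h ⟨min k n, by omega⟩) fun k => hh _).1 n
  have hprefix : (fun i : Fin (n + 1) => h ⟨min i n, by omega⟩) = h :=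
    funext fun i => congrArg h (Fin.ext (min_eq_left (Nat.le_of_lt_succ i.2)))
  rw [hprefix] at hrun
  convert hrun using 2
  exact Fin.ext (min_self n).symm

theorem subset_snoc (hh : ∀ i, h i ∈ CtblNetwork X) {𝒜 : Set (Set X)} (h𝒜 : 𝒜 ∈ CtblNetwork X) :
    ↑(σ n (Fin.snoc h 𝒜)) ⊆ 𝒜 := by
  simpa using hσ.subset_last (h := Fin.snoc h 𝒜) fun i =>
    Fin.lastCases (by simpa using h𝒜) (fun j => by simpa using hh j) i

theorem isClosed_sUnion_snoc (hh : ∀ i, h i ∈ CtblClosedNetwork X) {𝒜 : Set (Set X)}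
    (h𝒜 : 𝒜 ∈ CtblClosedNetwork X) : IsClosed (⋃₀ (σ n (Fin.snoc h 𝒜) : Set (Set X))) := by
  rw [sUnion_eq_biUnion]
  exact (σ n _).finite_toSet.isClosed_biUnion fun N hN =>
    h𝒜.2 N (hσ.subset_snoc (fun i => (hh i).1) h𝒜.1 hN)

theorem isClosed_capture (hh : ∀ i, h i ∈ CtblClosedNetwork X) : IsClosed (σ.capture h) :=
  isClosed_iInter fun 𝒜 => hσ.isClosed_sUnion_snoc hh 𝒜.2

theorem isCompact_capture (hh : ∀ i, h i ∈ CtblClosedNetwork X) {𝒩 : Set (Set X)}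
    (h𝒩 : 𝒩 ∈ CtblClosedNetwork X) : IsCompact (σ.capture h) := by
  set F := σ.capture h
  refine isCompact_of_finite_subcover fun {ι} U hU hFU => ?_
  rcases isEmpty_or_nonempty ι with hι | hι
  · exact ⟨∅, by simpa using hFU⟩
  let 𝒜 := {N ∈ 𝒩 | Disjoint N F ∨ ∃ i, N ⊆ U i}
  have h𝒜 : 𝒜 ∈ CtblClosedNetwork X :=
    ⟨⟨h𝒩.1.1.mono (sep_subset _ _),
      h𝒩.1.2.sep_disjoint_or_subset (hσ.isClosed_capture hh) hU hFU⟩,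
      fun N hN => h𝒩.2 N hN.1⟩
  have hFσ : F ⊆ ⋃₀ (σ n (Fin.snoc h 𝒜) : Set (Set X)) := fun x hx => mem_iInter.1 hx ⟨𝒜, h𝒜⟩
  have hσU : ∀ N ∈ σ n (Fin.snoc h 𝒜), ∃ i, N ∩ F ⊆ U i := by
    intro N hN
    rcases (hσ.subset_snoc (fun i => (hh i).1) h𝒜.1 hN).2 with hNF | ⟨i, hNU⟩
    · exact ⟨hι.some, by simp [hNF.inter_eq]⟩
    · exact ⟨i, inter_subset_left.trans hNU⟩
  classical
  choose! c hc using hσU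
  refine ⟨(σ n (Fin.snoc h 𝒜)).image c, fun x hx => ?_⟩
  obtain ⟨N, hN, hxN⟩ := hFσ hx
  exact mem_biUnion (Finset.mem_image_of_mem c hN) (hc N hN (mem_inter hxN hx))

theorem exists_iInter_eq_capture (hh : ∀ i, h i ∈ CtblClosedNetwork X) {𝒩 : Set (Set X)}
    (h𝒩 : 𝒩 ∈ CtblClosedNetwork X) :
    ∃ g : ℕ → Set (Set X), (∀ m, g m ∈ CtblClosedNetwork X) ∧
      ⋂ m, ⋃₀ ↑(σ n (Fin.snoc h (g m))) = σ.capture h := by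
  have := h𝒩.1.2.hereditarilyLindelofSpace h𝒩.1.1
  have : Nonempty (CtblClosedNetwork X) := ⟨⟨𝒩, h𝒩⟩⟩
  obtain ⟨k, hk⟩ := eq_open_union_nat
    (fun 𝒜 : CtblClosedNetwork X => (⋃₀ (σ n (Fin.snoc h 𝒜) : Set (Set X)))ᶜ)
    fun 𝒜 => (hσ.isClosed_sUnion_snoc hh 𝒜.2).isOpen_compl
  refine ⟨fun m => k m, fun m => (k m).2, ?_⟩
  simpa only [compl_iUnion, compl_compl, MBobStrategy.capture] using congrArg compl hk


theorem exists_reachable_forall_mem {g : ∀ n, (Fin n → Set (Set X)) → ℕ → Set (Set X)}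
    (hg : ∀ n h m, g n h m ∈ CtblNetwork X) (x : X) :
    ∃ n, ∃ h ∈ reachable g n, ∀ m, x ∈ ⋃₀ (σ n (Fin.snoc h (g n h m)) : Set (Set X)) := by
  by_contra! hx
  choose! c hc using hx
  set A := playOf fun k h => g k h (c k h)
  have hA (n : ℕ) : A n = g n (fun i : Fin n => A i) (c n fun i : Fin n => A i) := playOf_eq _ n
  obtain ⟨N, hN, hxN, -⟩ := (hσ A fun n => hA n ▸ hg _ _ _).2 x Set.univ isOpen_univ (mem_univ x)
  obtain ⟨n, hNn⟩ := mem_iUnion.1 hN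
  refine hc n _ (prefix_playOf_mem_reachable g c n) ⟨N, ?_, hxN⟩
  rwa [← hA, snoc_prefix]

theorem exists_reachable_capture_cover {𝒩 : Set (Set X)} (h𝒩 : 𝒩 ∈ CtblClosedNetwork X) :
    ∃ g : ∀ n, (Fin n → Set (Set X)) → ℕ → Set (Set X),
      (∀ n h m, g n h m ∈ CtblClosedNetwork X) ∧
        ⋃ n, ⋃ h ∈ reachable g n, σ.capture h = Set.univ := by
  have hg : ∀ n (h : Fin n → Set (Set X)), ∃ g : ℕ → Set (Set X), (∀ m, g m ∈ CtblClosedNetwork X) ∧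
      ((∀ i, h i ∈ CtblClosedNetwork X) → ⋂ m, ⋃₀ ↑(σ n (Fin.snoc h (g m))) = σ.capture h) := by
    intro n h
    by_cases hh : ∀ i, h i ∈ CtblClosedNetwork X
    · obtain ⟨g, hgL, hg⟩ := hσ.exists_iInter_eq_capture hh h𝒩
      exact ⟨g, hgL, fun _ => hg⟩
    · exact ⟨fun _ => 𝒩, fun _ => h𝒩, fun hh' => absurd hh' hh⟩
  choose g hgL hgcap using hg
  refine ⟨g, hgL, eq_univ_of_forall fun x => ?_⟩
  obtain ⟨n, h, hh, hx⟩ := hσ.exists_reachable_forall_mem (fun n h m => (hgL n h m).1) x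
  refine mem_iUnion₂.2 ⟨n, h, mem_iUnion.2 ⟨hh, ?_⟩⟩
  rw [← hgcap n h (mem_of_mem_reachable g hgL n h hh)]
  exact mem_iInter.2 hx

end MBobWinning

end

theorem stmt15 {X : Type*} [TopologicalSpace X] [T3Space X]
    (hnw : (CtblNetwork X).Nonempty) (h : MBobWins X) :
    ∃ K : ℕ → Set X, (∀ n, IsCompact (K n) ∧ TopologicalSpace.MetrizableSpace (K n)) ∧
      ⋃ n, K n = Set.univ := by
  obtain ⟨𝒩, h𝒩c, h𝒩⟩ := hnw
  obtain ⟨σ, hσ⟩ := h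
  have h𝒩₀ := h𝒩.image_closure_mem_ctblClosedNetwork h𝒩c
  obtain ⟨g, hgL, hcover⟩ := hσ.exists_reachable_capture_cover h𝒩₀
  obtain ⟨K, hK⟩ : ∃ K : ℕ → Set X, ⋃ n, σ.capture '' reachable g n = range K :=
    (countable_iUnion fun n => (countable_reachable g n).image _).exists_eq_range
      ⟨_, mem_iUnion_of_mem 0 (mem_image_of_mem _ (mem_univ Fin.elim0))⟩
  refine ⟨K, fun k => ?_, ?_⟩
  · have hk : K k ∈ ⋃ n, σ.capture '' reachable g n := hK ▸ mem_range_self k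
    obtain ⟨n, h, hh, hk⟩ := mem_iUnion.1 hk
    have hcpt := hσ.isCompact_capture (mem_of_mem_reachable g hgL n h hh) h𝒩₀
    have := isCompact_iff_compactSpace.1 hcpt
    rw [← hk]
    exact ⟨hcpt, metrizableSpace_of_isNetwork (h𝒩.preimage Topology.IsInducing.subtypeVal)
      (h𝒩c.image _)⟩
  · rw [← sUnion_range, ← hK, sUnion_iUnion]
    simpa [sUnion_image] using hcover
end
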